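/- arXiv:1111.2570 — 7 statements merged into one kernel-verified Lean document; each statement's English description precedes it below -/
import Mathlib

section
/- Let p be a prime, G a finite p-group acting on a finite set X with |X| ≥ 2. If G is generated by a set S such that every element of S fixes some point of X, then the action of G on X has at least two orbits. -/
theorem stmt_1 (p : ℕ) (hp : p.Prime) (G : Type*) [Group G] [Finite G]
    (hG : IsPGroup p G) (X : Type*) [Finite X] [MulAction G X]
    (hX : 2 ≤ Nat.card X)
    (S : Set G) (hgen : Subgroup.closure S = ⊤)
    (hfix : ∀ s ∈ S, ∃ x : X, s • x = x) :
    ∃ x y : X, MulAction.orbit G x ≠ MulAction.orbit G y := by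
  by_contra h
  push_neg at h
  haveI : Fact p.Prime := ⟨hp⟩
  haveI : Nontrivial X := Finite.one_lt_card_iff_nontrivial.mp hX
  obtain ⟨x₀⟩ := (inferInstance : Nonempty X)
  set H := MulAction.stabilizer G x₀ with hHdef
  have hH : H ≠ ⊤ := by
    obtain ⟨y, hy⟩ := exists_ne x₀
    have : y ∈ MulAction.orbit G x₀ := by
      rw [← h y x₀]; exact MulAction.mem_orbit_self y
    obtain ⟨g, hg⟩ := this
    intro htop
    have : g ∈ H := htop ▸ Subgroup.mem_top g
    exact hy (by rw [← hg]; exact this)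
  haveI : Group.IsNilpotent G := hG.isNilpotent
  obtain h1 | ⟨K, hK, hHK⟩ := (Finite.to_isCoatomic (α := Subgroup G)).eq_top_or_exists_le_coatom H
  · exact hH h1
  haveI hKnorm : K.Normal :=
    Subgroup.NormalizerCondition.normal_of_coatom K normalizerCondition_of_isNilpotent hK
  have hSK : S ⊆ K := by
    intro s hs
    obtain ⟨x, hx⟩ := hfix s hs
    have hxorb : x ∈ MulAction.orbit G x₀ := by
      rw [← h x x₀]; exact MulAction.mem_orbit_self x
    obtain ⟨g, hg⟩ := hxorb
    have hg' : g • x₀ = x := hg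
    have hmem : g⁻¹ * s * g ∈ H := by
      rw [hHdef, MulAction.mem_stabilizer_iff, mul_smul, mul_smul, hg', hx, ← hg',
        inv_smul_smul]
    have : g⁻¹ * s * g ∈ K := hHK hmem
    have := hKnorm.conj_mem _ this g
    simpa [mul_assoc] using this
  have : (⊤ : Subgroup G) ≤ K := hgen ▸ (Subgroup.closure_le K).mpr hSK
  exact hK.1 (top_le_iff.mp this)
end

section
/- Let p be a prime and G a finite p-group acting transitively on a finite set X with |X| ≥ 2. Then G cannot be generated by elements each of which has a fixed point in X. -/
theorem stmt_2 (p : ℕ) (hp : p.Prime) (G : Type*) [Group G] [Finite G]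
    (hG : IsPGroup p G) (X : Type*) [Finite X] [MulAction G X]
    [MulAction.IsPretransitive G X] (hX : 2 ≤ Nat.card X) :
    ∀ S : Set G, (∀ s ∈ S, ∃ x : X, s • x = x) → Subgroup.closure S ≠ ⊤ := by
  have : Fact p.Prime := ⟨hp⟩
  intro S hS hclos
  -- X is nonempty
  have hXne : Nonempty X := by
    have h0 : 0 < Nat.card X := by omega
    exact (Nat.card_pos_iff.mp h0).1
  obtain ⟨x₀⟩ := hXne
  -- the stabilizer of x₀ is a proper subgroup
  have hst : MulAction.stabilizer G x₀ ≠ ⊤ := by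
    intro h
    have := MulAction.index_stabilizer_of_transitive G x₀
    rw [h, Subgroup.index_top] at this
    omega
  -- get a maximal subgroup above it
  obtain ⟨M, hM, hle⟩ := (IsCoatomic.eq_top_or_exists_le_coatom
    (MulAction.stabilizer G x₀)).resolve_left hst
  -- M is normal since G is nilpotent
  have hnil : Group.IsNilpotent G := hG.isNilpotent
  have hnorm : M.Normal :=
    Subgroup.NormalizerCondition.normal_of_coatom M normalizerCondition_of_isNilpotent hM
  -- every stabilizer is contained in M
  have hstab : ∀ y : X, MulAction.stabilizer G y ≤ M := by
    intro y
    obtain ⟨g, rfl⟩ := MulAction.exists_smul_eq G x₀ y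
    rw [MulAction.stabilizer_smul_eq_stabilizer_map_conj]
    intro a ha
    obtain ⟨b, hb, rfl⟩ := ha
    have : b ∈ M := hle hb
    simpa using hnorm.conj_mem b this g
  -- hence closure S ≤ M
  have : Subgroup.closure S ≤ M := by
    apply Subgroup.closure_le M |>.mpr
    intro s hs
    obtain ⟨y, hy⟩ := hS s hs
    exact hstab y hy
  rw [hclos] at this
  exact hM.1 (top_le_iff.mp this)
end

section
/- Let p be a prime and G a p-group acting transitively on a set X with |X| = p^n, n ≥ 1. Then the induced action of G on the collection of subsets of X of size p^(n-1) has an orbit of size exactly p. -/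
open Pointwise

theorem stmt_3 (p n : ℕ) (hp : p.Prime) (hn : 1 ≤ n) (G : Type*) [Group G]
    (hG : IsPGroup p G) (X : Type*) [Fintype X] [DecidableEq X] [MulAction G X]
    [MulAction.IsPretransitive G X] (hX : Fintype.card X = p ^ n) :
    ∃ U : Finset X, U.card = p ^ (n - 1) ∧ Nat.card (MulAction.orbit G U) = p := by
  classical
  haveI : Fact p.Prime := ⟨hp⟩
  set k := p ^ (n - 1) with hk
  have hk0 : k ≠ 0 := pow_ne_zero _ hp.pos.ne'
  have hklt : k < p ^ n := pow_lt_pow_right₀ hp.one_lt (Nat.sub_lt hn one_pos)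
  -- no fixed points: every orbit has size > 1
  have horb_ne_one : ∀ U : Finset X, U.card = k → Nat.card (MulAction.orbit G U) ≠ 1 := by
    intro U hU h1
    have hfix : ∀ g : G, g • U = U := by
      intro g
      have hsub : Subsingleton (MulAction.orbit G U) :=
        (Nat.card_eq_one_iff_unique.mp h1).1
      have h1' : (⟨g • U, MulAction.mem_orbit U g⟩ : MulAction.orbit G U) =
          ⟨U, MulAction.mem_orbit_self U⟩ := Subsingleton.elim _ _
      exact congrArg Subtype.val h1'
    obtain ⟨x, hx⟩ := Finset.card_pos.mp (by rw [hU]; exact Nat.pos_of_ne_zero hk0)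
    have hUuniv : U = Finset.univ := by
      ext y
      simp only [Finset.mem_univ, iff_true]
      obtain ⟨g, hg⟩ := MulAction.exists_smul_eq G x y
      have : g • x ∈ g • U := Finset.smul_mem_smul_finset hx
      rwa [hfix g, hg] at this
    rw [hUuniv, Finset.card_univ, hX] at hU
    exact absurd hU.symm hklt.ne
  by_contra hcon
  push_neg at hcon
  -- every orbit size is divisible by p^2
  have horb_dvd : ∀ U : Finset X, U.card = k → p ^ 2 ∣ Nat.card (MulAction.orbit G U) := by
    intro U hU
    obtain ⟨m, hm⟩ := hG.card_orbit U
    rcases Nat.lt_or_ge m 2 with hm2 | hm2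
    · interval_cases m
      · exact absurd (hm.trans (pow_zero p)) (horb_ne_one U hU)
      · exact absurd (hm.trans (pow_one p)) (hcon U hU)
    · rw [hm]; exact pow_dvd_pow p hm2
  -- the counting
  set f : Finset X → MulAction.orbitRel.Quotient G (Finset X) := Quotient.mk'' with hf
  set T : Finset (Finset X) := Finset.univ.powersetCard k with hT
  have hTcard : T.card = (p ^ n).choose k := by
    rw [hT, Finset.card_powersetCard, Finset.card_univ, hX]
  have hmemT : ∀ U : Finset X, U ∈ T ↔ U.card = k := by
    intro U
    simp [hT, Finset.mem_powersetCard_univ]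
  have hsum : T.card = ∑ c ∈ T.image f, (T.filter (fun V => f V = c)).card :=
    Finset.card_eq_sum_card_fiberwise (fun x hx => Finset.mem_image_of_mem f hx)
  have hdvd : p ^ 2 ∣ (p ^ n).choose k := by
    rw [← hTcard, hsum]
    apply Finset.dvd_sum
    intro c hc
    obtain ⟨U, hU, hUc⟩ := Finset.mem_image.mp hc
    have hUk : U.card = k := (hmemT U).mp hU
    have hfiber : T.filter (fun V => f V = c) = (MulAction.orbit G U).toFinset := by
      ext V
      simp only [Finset.mem_filter, Set.mem_toFinset, hmemT, ← hUc, hf]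
      constructor
      · rintro ⟨-, hV⟩
        exact Quotient.eq''.mp hV
      · intro hV
        obtain ⟨g, hg⟩ := id hV
        refine ⟨?_, Quotient.eq''.mpr hV⟩
        rw [← hg]
        simp [Finset.card_smul_finset, hUk]
    rw [hfiber, Set.toFinset_card, ← Nat.card_eq_fintype_card]
    exact horb_dvd U hUk
  -- contradiction with multiplicity exactly 1
  have hemult : emultiplicity p ((p ^ n).choose k) = ((n - (n - 1) : ℕ) : ℕ∞) := by
    rw [hp.emultiplicity_choose_prime_pow hklt.le hk0, hk,
      multiplicity_pow_self_of_prime hp.prime]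
  have hn1 : n - (n - 1) = 1 := by omega
  have : (2 : ℕ∞) ≤ emultiplicity p ((p ^ n).choose k) :=
    le_emultiplicity_of_pow_dvd hdvd
  rw [hemult, hn1] at this
  exact absurd this (by norm_num)
end

section
/- Let (G,S) be a cube group, with associated permutation representation j: G → Aut(S) (defined on generators by s ↦ j_s). If T ⊆ S is a G-invariant subset under this action, then G = G_T · G_{S−T} with G_T ∩ G_{S−T} = {1}, where G_T denotes the subgroup generated by T; that is, every g ∈ G factors uniquely as g = g₁g₂ with g₁ ∈ G_T and g₂ ∈ G_{S−T}. -/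
/-- The graph on `ι → Bool` (the 1-skeleton of the `ι`-cube): two vertices are
adjacent iff they differ in exactly one coordinate. -/
def cubeGraph (ι : Type*) : SimpleGraph (ι → Bool) where
  Adj x y := ∃! i, x i ≠ y i
  symm := by
    constructor
    rintro x y ⟨i, hi, hu⟩
    exact ⟨i, fun h => hi h.symm, fun j hj => hu j (fun h => hj h.symm)⟩
  loopless := by constructor; rintro x ⟨i, hi, -⟩; exact hi rfl

/-- The Cayley graph of a group with respect to a set `S`. -/
def cayleyGraph {G : Type*} [Group G] (S : Set G) : SimpleGraph G where
  Adj x y := (x⁻¹ * y ∈ S ∨ y⁻¹ * x ∈ S) ∧ x ≠ y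
  symm := by constructor; rintro x y ⟨h, hne⟩; exact ⟨h.symm, hne.symm⟩
  loopless := by constructor; rintro x ⟨-, h⟩; exact h rfl

/-- `(G, S)` is a cube group: `S` is a set of involutions generating `G`, and the
Cayley graph `Cay(G,S)` is isomorphic to the 1-skeleton of the `|S|`-cube. -/
def IsCubeGroup {G : Type*} [Group G] (S : Set G) : Prop :=
  (∀ s ∈ S, s * s = 1 ∧ s ≠ 1) ∧ Subgroup.closure S = ⊤ ∧
    Nonempty (cayleyGraph S ≃g cubeGraph S)

private lemma boolAux1 {a b c : Bool} (h1 : a ≠ b) (h2 : b ≠ c) : a = c := by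
  cases a <;> cases b <;> cases c <;> simp_all

private lemma boolAux2 {a b c : Bool} (h1 : a ≠ b) (h2 : a ≠ c) : b = c := by
  cases a <;> cases b <;> cases c <;> simp_all

/-- The square lemma in a cube: opposite edges of a 4-cycle flip the same coordinate. -/
private lemma cube_square {W : Type*} (x y z u : W → Bool) (p q r w : W)
    (hp : ∀ i, (x i ≠ y i ↔ i = p)) (hq : ∀ i, (y i ≠ z i ↔ i = q))
    (hr : ∀ i, (x i ≠ u i ↔ i = r)) (hw : ∀ i, (u i ≠ z i ↔ i = w))
    (hxz : x ≠ z) (hyu : y ≠ u) : q = r := by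
  have hrp : r ≠ p := by
    rintro rfl
    apply hyu; funext i
    by_cases hi : i = r
    · subst hi; exact boolAux2 ((hp i).mpr rfl) ((hr i).mpr rfl)
    · have h1 : x i = y i := by by_contra hh; exact hi ((hp i).mp hh)
      have h2 : x i = u i := by by_contra hh; exact hi ((hr i).mp hh)
      rw [← h1, h2]
  have hrw : r ≠ w := by
    intro hrw
    apply hxz; funext i
    by_cases hi : i = r
    · subst hi; exact boolAux1 ((hr i).mpr rfl) ((hw i).mpr hrw)
    · have h1 : x i = u i := by by_contra hh; exact hi ((hr i).mp hh)
      have h2 : u i = z i := by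
        by_contra hh; exact hi (((hw i).mp hh).trans hrw.symm)
      rw [h1, h2]
  have h1 : x r ≠ u r := (hr r).mpr rfl
  have h2 : u r = z r := by by_contra hh; exact hrw ((hw r).mp hh)
  have h3 : x r ≠ z r := h2 ▸ h1
  have h4 : x r = y r := by by_contra hh; exact hrp ((hp r).mp hh)
  have h5 : y r ≠ z r := h4 ▸ h3
  exact ((hq r).mp h5).symm

theorem stmt_9 (G : Type*) [Group G] (S : Set G) (hS : IsCubeGroup S)
    (j : G →* Equiv.Perm S)
    -- `j` is the permutation representation of the decorated graph of `(G,S)`: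
    -- each `j s` fixes `s`, and the 4-cycle (trajectory) relations hold.
    (hjfix : ∀ s : S, j (s : G) s = s)
    (hjtraj : ∀ s t : S, (s : G) * t * (j (t : G) s : G) *
      ((j ((j (t : G) s : S) : G) t : S) : G) = 1)
    (T : Set G) (hTS : T ⊆ S)
    (hTinv : ∀ (g : G) (s : S), (s : G) ∈ T → ((j g s : S) : G) ∈ T) :
    (Subgroup.closure T ⊓ Subgroup.closure (S \ T) = ⊥) ∧
      ∀ g : G, ∃! q : Subgroup.closure T × Subgroup.closure (S \ T),
        ((q.1 : G) * (q.2 : G) = g) := by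
  obtain ⟨hinv, hgen, ⟨φ⟩⟩ := hS
  -- basic facts about involutions
  have Sinv' : ∀ u ∈ S, u⁻¹ = u := fun u hu => inv_eq_of_mul_eq_one_right (hinv u hu).1
  have sInv : ∀ x : S, (x : G)⁻¹ = x := fun x => Sinv' x x.2
  have sne1 : ∀ x : S, (x : G) ≠ 1 := fun x => (hinv x x.2).2
  have jInvApply : ∀ (x t : S), j (x : G) (j (x : G) t) = t := by
    intro x t
    have h : (j (x : G) * j (x : G)) t = t := by
      rw [← map_mul, (hinv x x.2).1, map_one]; rfl
    simpa [Equiv.Perm.mul_apply] using h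
  -- the complement of T in S is also invariant
  have hHinv : ∀ (g : G) (s : S), (s : G) ∈ S \ T → ((j g s : S) : G) ∈ S \ T := by
    intro g s hs
    refine ⟨(j g s).2, fun hmem => hs.2 ?_⟩
    have h1 := hTinv g⁻¹ (j g s) hmem
    have h2 : j g⁻¹ (j g s) = s := by
      have h3 : (j g⁻¹ * j g) s = s := by rw [← map_mul, inv_mul_cancel, map_one]; rfl
      simp only [Equiv.Perm.mul_apply] at h3; exact h3
    rwa [h2] at h1
  -- subgroup closure = submonoid closure for subsets of S
  have clEq : ∀ U : Set G, U ⊆ S → ∀ x : G,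
      (x ∈ Subgroup.closure U ↔ x ∈ Submonoid.closure U) := by
    intro U hU x
    have hUU : U ∪ U⁻¹ = U := by
      ext y; constructor
      · rintro (hy | hy)
        · exact hy
        · rw [Set.mem_inv] at hy
          have h1 : (y⁻¹)⁻¹ = y⁻¹ := Sinv' y⁻¹ (hU hy)
          have h2 : y = y⁻¹ := (inv_inv y).symm.trans h1
          exact h2 ▸ hy
      · intro hy; exact Or.inl hy
    rw [← Subgroup.mem_toSubmonoid, Subgroup.closure_toSubmonoid, hUU]
  -- the swap relation coming from trajectories
  have groupSwap : ∀ t s : S,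
      (t : G) * s = ((j ((j (s : G) t : S) : G) s : S) : G) * ((j (s : G) t : S) : G) := by
    intro t s
    have h1 := hjtraj t s
    have h3 : (t : G) * s * (((j (s : G) t : S) : G) *
        ((j ((j (s : G) t : S) : G) s : S) : G)) = 1 := by
      rw [← mul_assoc]; exact h1
    have h4 := mul_eq_one_iff_eq_inv.mp h3
    rw [h4, mul_inv_rev, sInv, sInv]
  have tne_v : ∀ t s : S, t ≠ s →
      (t : G) ≠ ((j ((j (s : G) t : S) : G) s : S) : G) := by
    intro t s hts h
    have hgrp := groupSwap t s
    rw [← h] at hgrp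
    have hsu : (s : G) = ((j (s : G) t : S) : G) := mul_left_cancel hgrp
    have hsu' : s = j (s : G) t := Subtype.coe_injective hsu
    have h7 := jInvApply s t
    rw [← hsu', hjfix s] at h7
    exact hts h7.symm
  -- graph-theoretic facts
  have cadj : ∀ (g : G) (s : S), (cayleyGraph S).Adj g (g * s) := by
    intro g s
    show (g⁻¹ * (g * s) ∈ S ∨ (g * s)⁻¹ * g ∈ S) ∧ g ≠ g * s
    refine ⟨Or.inl ?_, fun h => sne1 s (left_eq_mul.mp h)⟩
    rw [inv_mul_cancel_left]; exact s.2
  have cubeadj : ∀ (g : G) (s : S), ∃! i : S, φ g i ≠ φ (g * s) i := by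
    intro g s
    have h := φ.map_adj_iff.mpr (cadj g s)
    exact h
  have uniq : ∀ (g : G) (s : S) (i : S), (φ g i ≠ φ (g * s) i) →
      ∀ k : S, (φ g k ≠ φ (g * s) k ↔ k = i) := by
    intro g s i hi k
    obtain ⟨p, hp, hup⟩ := cubeadj g s
    have hip : i = p := hup i hi
    constructor
    · intro hk; rw [hup k hk, hip]
    · rintro rfl; exact hi
  have φinj : Function.Injective φ := φ.injective
  -- the geometric square lemma in our Cayley graph
  have squareGen : ∀ (a : G) (t s v' u' : S), (t : G) ≠ s →
      (t : G) * s = (v' : G) * u' → (t : G) ≠ v' → ∀ i : S,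
      φ (a * t) i ≠ φ (a * t * s) i → φ a i ≠ φ (a * v') i := by
    intro a t s v' u' hts hgrp htv i hi
    have hac : a ≠ a * t * s := by
      intro h
      rw [mul_assoc] at h
      have h2 : (t : G) * s = 1 := left_eq_mul.mp h
      exact hts (by rw [mul_eq_one_iff_eq_inv.mp h2, sInv])
    have hbd : a * (t : G) ≠ a * (v' : G) := fun h => htv (mul_left_cancel h)
    obtain ⟨p, hp, -⟩ := cubeadj a t
    obtain ⟨r, hr, -⟩ := cubeadj a v'
    obtain ⟨w, hw, -⟩ := cubeadj (a * (v' : G)) u'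
    have hz : a * (t : G) * s = a * (v' : G) * u' := by
      rw [mul_assoc, hgrp, ← mul_assoc]
    have hq := cube_square (φ a) (φ (a * (t : G))) (φ (a * (t : G) * s)) (φ (a * (v' : G)))
      p i r w
      (uniq a t p hp) (uniq (a * (t : G)) s i hi) (uniq a v' r hr)
      (fun k => by rw [hz]; exact uniq (a * (v' : G)) u' w hw k)
      (fun h => hac (φinj h)) (fun h => hbd (φinj h))
    exact (uniq a v' r hr i).mpr hq
  -- transporting flipped directions along words
  have transport : ∀ (U : Set G), U ⊆ S →
      (∀ (g : G) (s : S), (s : G) ∈ U → ((j g s : S) : G) ∈ U) →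
      ∀ b ∈ Submonoid.closure U, ∀ (a : G) (i : S),
        (∃ s : S, (s : G) ∈ U ∧ φ (a * b) i ≠ φ (a * b * s) i) →
        (∃ s : S, (s : G) ∈ U ∧ φ a i ≠ φ (a * s) i) := by
    intro U hUS hUinv b hb
    refine Submonoid.closure_induction
      (motive := fun b _ => ∀ (a : G) (i : S),
        (∃ s : S, (s : G) ∈ U ∧ φ (a * b) i ≠ φ (a * b * s) i) →
        (∃ s : S, (s : G) ∈ U ∧ φ a i ≠ φ (a * s) i)) ?_ ?_ ?_ hb
    · rintro tG htU a i ⟨s, hsU, hD⟩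
      by_cases hst : (⟨tG, hUS htU⟩ : S) = s
      · have hcoe : (s : G) = tG := by rw [← hst]
        have h1 : a * tG * s = a := by
          rw [hcoe, mul_assoc, (hinv tG (hUS htU)).1, mul_one]
        rw [h1] at hD
        refine ⟨s, hsU, ?_⟩
        rw [hcoe]
        exact hD.symm
      · have hne : (⟨tG, hUS htU⟩ : S) ≠ s := hst
        have hts : ((⟨tG, hUS htU⟩ : S) : G) ≠ s := fun h => hne (Subtype.coe_injective h)
        have hsq := squareGen a ⟨tG, hUS htU⟩ s _ _ hts
          (groupSwap ⟨tG, hUS htU⟩ s) (tne_v ⟨tG, hUS htU⟩ s hne) i hD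
        exact ⟨_, hUinv _ s hsU, hsq⟩
    · intro a i h
      simpa using h
    · intro x y hx hy ihx ihy a i h
      rw [← mul_assoc] at h
      exact ihx a i (ihy (a * x) i h)
  -- coordinates flipped by a word lie in the directions of its letters
  have collect : ∀ (U : Set G), U ⊆ S →
      (∀ (g : G) (s : S), (s : G) ∈ U → ((j g s : S) : G) ∈ U) →
      ∀ b ∈ Submonoid.closure U, ∀ (a : G) (i : S),
        φ (a * b) i ≠ φ a i →
        (∃ s : S, (s : G) ∈ U ∧ φ a i ≠ φ (a * s) i) := by
    intro U hUS hUinv b hb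
    refine Submonoid.closure_induction
      (motive := fun b _ => ∀ (a : G) (i : S), φ (a * b) i ≠ φ a i →
        (∃ s : S, (s : G) ∈ U ∧ φ a i ≠ φ (a * s) i)) ?_ ?_ ?_ hb
    · intro t ht a i hD
      exact ⟨⟨t, hUS ht⟩, ht, hD.symm⟩
    · intro a i h
      rw [mul_one] at h
      exact absurd rfl h
    · intro x y hx hy ihx ihy a i h
      rw [← mul_assoc] at h
      by_cases hmid : φ (a * x * y) i = φ (a * x) i
      · exact ihx a i (hmid ▸ h)
      · exact transport U hUS hUinv x hx a i (ihy (a * x) i hmid)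
  -- triviality of the intersection
  have trivKey : ∀ g : G, g ∈ Submonoid.closure T → g ∈ Submonoid.closure (S \ T) → g = 1 := by
    intro g h1 h2
    have hφ : φ g = φ 1 := by
      funext i
      by_contra hne
      have hne' : φ (1 * g) i ≠ φ 1 i := by rwa [one_mul]
      obtain ⟨s, hsT, hDs⟩ := collect T hTS hTinv g h1 1 i hne'
      obtain ⟨s', hs'H, hDs'⟩ := collect (S \ T) Set.diff_subset hHinv g h2 1 i hne'
      have hiff := uniq 1 s i hDs
      have hiff' := uniq 1 s' i hDs'
      have heq : φ (1 * (s : G)) = φ (1 * (s' : G)) := by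
        funext k
        by_cases hk : k = i
        · subst hk; exact boolAux2 hDs hDs'
        · have e1 : φ 1 k = φ (1 * (s : G)) k := by
            by_contra hh; exact hk ((hiff k).mp hh)
          have e2 : φ 1 k = φ (1 * (s' : G)) k := by
            by_contra hh; exact hk ((hiff' k).mp hh)
          rw [← e1, e2]
      have hss : (s : G) = s' := by
        have := φinj heq
        simpa using this
      exact hs'H.2 (hss ▸ hsT)
    exact φinj hφ
  have hInf : Subgroup.closure T ⊓ Subgroup.closure (S \ T) = ⊥ := by
    rw [eq_bot_iff]
    intro x hx
    rw [Subgroup.mem_inf] at hx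
    rw [Subgroup.mem_bot]
    exact trivKey x ((clEq T hTS x).mp hx.1) ((clEq _ Set.diff_subset x).mp hx.2)
  -- existence of the factorization
  have swapTH : ∀ b ∈ Submonoid.closure (S \ T), ∀ s : S, (s : G) ∈ T →
      ∃ s' : S, (s' : G) ∈ T ∧ ∃ b' ∈ Submonoid.closure (S \ T), b * s = (s' : G) * b' := by
    intro b hb
    refine Submonoid.closure_induction
      (motive := fun b _ => ∀ s : S, (s : G) ∈ T →
        ∃ s' : S, (s' : G) ∈ T ∧ ∃ b' ∈ Submonoid.closure (S \ T), b * s = (s' : G) * b')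
      ?_ ?_ ?_ hb
    · intro tG htH s hsT
      have hgrp := groupSwap ⟨tG, htH.1⟩ s
      exact ⟨j ((j (s : G) ⟨tG, htH.1⟩ : S) : G) s, hTinv _ s hsT,
        ((j (s : G) ⟨tG, htH.1⟩ : S) : G),
        Submonoid.subset_closure (hHinv (s : G) ⟨tG, htH.1⟩ htH), hgrp⟩
    · intro s hsT
      exact ⟨s, hsT, 1, one_mem _, by rw [one_mul, mul_one]⟩
    · intro x y hx hy ihx ihy s hsT
      obtain ⟨s₂, hs₂, b₂, hb₂, hE₂⟩ := ihy s hsT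
      obtain ⟨s₁, hs₁, b₁, hb₁, hE₁⟩ := ihx s₂ hs₂
      exact ⟨s₁, hs₁, b₁ * b₂, mul_mem hb₁ hb₂,
        by rw [mul_assoc, hE₂, ← mul_assoc, hE₁, mul_assoc]⟩
  have commute' : ∀ a ∈ Submonoid.closure T, ∀ b ∈ Submonoid.closure (S \ T),
      ∃ a' ∈ Submonoid.closure T, ∃ b' ∈ Submonoid.closure (S \ T), b * a = a' * b' := by
    intro a ha
    refine Submonoid.closure_induction
      (motive := fun a _ => ∀ b ∈ Submonoid.closure (S \ T),
        ∃ a' ∈ Submonoid.closure T, ∃ b' ∈ Submonoid.closure (S \ T), b * a = a' * b')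
      ?_ ?_ ?_ ha
    · intro sG hsT b hb
      obtain ⟨s', hs', b', hb', hE⟩ := swapTH b hb ⟨sG, hTS hsT⟩ hsT
      exact ⟨(s' : G), Submonoid.subset_closure hs', b', hb', hE⟩
    · intro b hb
      exact ⟨1, one_mem _, b, hb, by rw [mul_one, one_mul]⟩
    · intro x y hx hy ihx ihy b hb
      obtain ⟨a₁, ha₁, b₁, hb₁, hE₁⟩ := ihx b hb
      obtain ⟨a₂, ha₂, b₂, hb₂, hE₂⟩ := ihy b₁ hb₁
      exact ⟨a₁ * a₂, mul_mem ha₁ ha₂, b₂, hb₂,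
        by rw [← mul_assoc, hE₁, mul_assoc, hE₂, ← mul_assoc]⟩
  have exists_fact : ∀ g : G, ∃ a ∈ Submonoid.closure T,
      ∃ b ∈ Submonoid.closure (S \ T), g = a * b := by
    intro g
    have hg : g ∈ Submonoid.closure S :=
      (clEq S subset_rfl g).mp (by rw [hgen]; trivial)
    refine Submonoid.closure_induction
      (motive := fun g _ => ∃ a ∈ Submonoid.closure T, ∃ b ∈ Submonoid.closure (S \ T), g = a * b)
      ?_ ?_ ?_ hg
    · intro s hs
      by_cases hsT : s ∈ T
      · exact ⟨s, Submonoid.subset_closure hsT, 1, one_mem _, (mul_one s).symm⟩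
      · exact ⟨1, one_mem _, s, Submonoid.subset_closure ⟨hs, hsT⟩, (one_mul s).symm⟩
    · exact ⟨1, one_mem _, 1, one_mem _, (one_mul 1).symm⟩
    · rintro x y hx hy ⟨a₁, ha₁, b₁, hb₁, hE₁⟩ ⟨a₂, ha₂, b₂, hb₂, hE₂⟩
      obtain ⟨a', ha', b', hb', hE⟩ := commute' a₂ ha₂ b₁ hb₁
      refine ⟨a₁ * a', mul_mem ha₁ ha', b' * b₂, mul_mem hb' hb₂, ?_⟩
      rw [hE₁, hE₂]
      calc a₁ * b₁ * (a₂ * b₂) = a₁ * (b₁ * a₂) * b₂ := by group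
        _ = a₁ * (a' * b') * b₂ := by rw [hE]
        _ = a₁ * a' * (b' * b₂) := by group
  refine ⟨hInf, fun g => ?_⟩
  obtain ⟨a, ha, b, hb, hE⟩ := exists_fact g
  have haSub : a ∈ Subgroup.closure T := (clEq T hTS a).mpr ha
  have hbSub : b ∈ Subgroup.closure (S \ T) := (clEq _ Set.diff_subset b).mpr hb
  refine ⟨(⟨a, haSub⟩, ⟨b, hbSub⟩), hE.symm, ?_⟩
  rintro ⟨a', b'⟩ hq
  have h1 : (a' : G) * b' = a * b := hq.trans hE
  have hx2 : a⁻¹ * (a' : G) = b * (b' : G)⁻¹ := by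
    calc a⁻¹ * (a' : G) = a⁻¹ * (((a' : G) * b') * (b' : G)⁻¹) := by group
      _ = a⁻¹ * ((a * b) * (b' : G)⁻¹) := by rw [h1]
      _ = b * (b' : G)⁻¹ := by group
  have hin : a⁻¹ * (a' : G) ∈ Subgroup.closure T ⊓ Subgroup.closure (S \ T) :=
    Subgroup.mem_inf.mpr ⟨mul_mem (inv_mem haSub) a'.2,
      hx2 ▸ mul_mem hbSub (inv_mem b'.2)⟩
  rw [hInf, Subgroup.mem_bot] at hin
  have hA : a = (a' : G) := by
    have := inv_mul_eq_one.mp hin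
    exact this
  have hB : b = (b' : G) := by
    have h2 : (a' : G) * b' = (a' : G) * b := h1.trans (by rw [hA])
    exact (mul_left_cancel h2).symm
  exact Prod.ext (Subtype.ext hA.symm) (Subtype.ext hB.symm)
end

section
/- Let S be a finite set and Γ = {j_s : s ∈ S} a decorated graph (each j_s an involution of S fixing s) that is admissible, i.e., every trajectory is 4-periodic and has no holonomy. Then the assignment s ↦ j_s extends uniquely to a group homomorphism j: W(Γ) → Aut(S), where W(Γ) = ⟨S | s² = 1 for all s ∈ S, s₁s₂s₃s₄ = 1 for every trajectory s₁,s₂,s₃,s₄,…⟩. -/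
/-- The trajectory determined by a decorated graph `j` starting at `(s, t)`:
`s₁ = s`, `s₂ = t`, `s_{n+1} = j_{s_n}(s_{n-1})` (0-indexed here). -/
def traj {S : Type*} (j : S → Equiv.Perm S) (s t : S) : ℕ → S
  | 0 => s
  | 1 => t
  | n + 2 => j (traj j s t (n + 1)) (traj j s t n)

/-- The relations of the group `W(Γ)`: each generator is an involution, and the
product of the first four terms of every trajectory is trivial. -/
def cubeRels {S : Type*} (j : S → Equiv.Perm S) : Set (FreeGroup S) :=
  {w | (∃ s : S, w = .of s * .of s) ∨
    ∃ s t : S, s ≠ t ∧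
      w = .of (traj j s t 0) * .of (traj j s t 1) * .of (traj j s t 2) * .of (traj j s t 3)}

theorem stmt_10 (S : Type*) [Finite S] (j : S → Equiv.Perm S)
    (hinv : ∀ s, j s * j s = 1) (hfix : ∀ s, j s s = s)
    -- admissibility: every trajectory is 4-periodic ...
    (hper : ∀ (s t : S), s ≠ t → ∀ n, traj j s t (n + 4) = traj j s t n)
    -- ... and has no holonomy
    (hhol : ∀ (s t : S), s ≠ t →
      j (traj j s t 3) * j (traj j s t 2) * j (traj j s t 1) * j (traj j s t 0) = 1) :
    ∃! φ : PresentedGroup (cubeRels j) →* Equiv.Perm S,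
      ∀ s : S, φ (PresentedGroup.of s) = j s := by

  have hinv' : ∀ u, (j u)⁻¹ = j u := fun u => by
    rw [inv_eq_iff_mul_eq_one, hinv u]
  have hrel : ∀ r ∈ cubeRels j, FreeGroup.lift j r = 1 := by
    rintro r (⟨s, rfl⟩ | ⟨s, t, hst, rfl⟩)
    · simp [hinv s]
    · simp only [map_mul, FreeGroup.lift_apply_of]
      have h2 : (j (traj j s t 3) * j (traj j s t 2) * j (traj j s t 1) *
          j (traj j s t 0))⁻¹ = 1 := by rw [hhol s t hst]; simp
      simpa [mul_inv_rev, hinv', mul_assoc] using h2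
  refine ⟨PresentedGroup.toGroup hrel, fun s => PresentedGroup.toGroup.of hrel, ?_⟩
  intro g hg
  exact MonoidHom.ext fun x => PresentedGroup.toGroup.unique hrel g hg
end

section
/- Let (G,S) be a cube group and T ⊆ S a G-invariant subset (under the permutation representation). Then (G_T, T) is itself a cube group: the Cayley graph Cay(G_T, T) is isomorphic to the |T|-cube. -/
namespace Stmt16Aux

open Classical

variable {G : Type*} [Group G] {S : Set G}

lemma inv_self (hinv : ∀ s ∈ S, s * s = 1 ∧ s ≠ 1) {x : G} (hx : x ∈ S) : x⁻¹ = x :=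
  ((eq_inv_of_mul_eq_one_left (hinv x hx).1).symm)

lemma cayley_adj (hinv : ∀ s ∈ S, s * s = 1 ∧ s ≠ 1) {g h : G} :
    (cayleyGraph S).Adj g h ↔ g⁻¹ * h ∈ S := by
  constructor
  · rintro ⟨hm | hm, hne⟩
    · exact hm
    · have : (h⁻¹ * g)⁻¹ ∈ S := by rw [inv_self hinv hm]; exact hm
      simpa [mul_inv_rev] using this
  · intro hm
    refine ⟨Or.inl hm, fun h' => (hinv _ hm).2 ?_⟩
    subst h'
    simpa using hm

/-- membership of a list product -/
lemma exists_list (hinv : ∀ s ∈ S, s * s = 1 ∧ s ≠ 1) {g : G}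
    (hg : g ∈ Subgroup.closure S) :
    ∃ l : List G, (∀ x ∈ l, x ∈ S) ∧ l.prod = g := by
  have hU : S ∪ S⁻¹ = S := by
    apply Set.Subset.antisymm
    · rintro x (hx | hx)
      · exact hx
      · rw [Set.mem_inv] at hx
        have := inv_self hinv hx
        rw [← inv_inv x, this]; exact hx
    · exact Set.subset_union_left
  have : g ∈ Submonoid.closure (S ∪ S⁻¹) := by
    rw [← Subgroup.closure_toSubmonoid] at *
    exact hg
  rw [hU] at this
  exact Submonoid.exists_list_of_mem_closure this

variable (φ : G ≃ (↥S → Bool))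

/-- The hypothesis that `φ` transports the Cayley graph to the cube graph. -/
def IsCoord (φ : G ≃ (↥S → Bool)) : Prop :=
  ∀ g h : G, g⁻¹ * h ∈ S ↔ ∃! i : ↥S, φ g i ≠ φ h i

variable {φ}

lemma mem_mul (g : G) (s : ↥S) : g⁻¹ * (g * ↑s) ∈ S := by
  simpa using s.2

/-- the coordinate flipped by the edge `{g, g·s}`. -/
noncomputable def beta (hadj : IsCoord φ) (g : G) (s : ↥S) : ↥S :=
  Classical.choose ((hadj g (g * ↑s)).mp (mem_mul g s))

lemma beta_spec (hadj : IsCoord φ) (g : G) (s : ↥S) :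
    φ g (beta hadj g s) ≠ φ (g * ↑s) (beta hadj g s) := by
  unfold beta
  exact (Classical.choose_spec ((hadj g (g * ↑s)).mp (mem_mul g s))).1

lemma beta_uniq (hadj : IsCoord φ) (g : G) (s : ↥S) {i : ↥S}
    (hi : φ g i ≠ φ (g * ↑s) i) : i = beta hadj g s := by
  unfold beta
  exact (Classical.choose_spec ((hadj g (g * ↑s)).mp (mem_mul g s))).2 i hi

lemma flip_eq (hadj : IsCoord φ) (g : G) (s : ↥S) (i : ↥S) :
    φ (g * ↑s) i = if i = beta hadj g s then !(φ g i) else φ g i := by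
  split_ifs with h
  · subst h
    exact Bool.eq_not_iff.mpr (Ne.symm (beta_spec hadj g s))
  · have : ¬ (φ g i ≠ φ (g * ↑s) i) := fun hc => h (beta_uniq hadj g s hc)
    simp only [ne_eq, not_not] at this
    exact this.symm

lemma beta_inj (hadj : IsCoord φ) (g : G) {s t : ↥S}
    (h : beta hadj g s = beta hadj g t) : s = t := by
  have : g * ↑s = g * ↑t := by
    apply φ.injective
    funext i
    rw [flip_eq hadj g s i, flip_eq hadj g t i, h]
  exact Subtype.ext (mul_left_cancel this)

lemma beta_surj (hadj : IsCoord φ) (g : G) (i : ↥S) : ∃ s : ↥S, beta hadj g s = i := by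
  set x : ↥S → Bool := fun k => if k = i then !(φ g k) else φ g k with hx
  have hd : ∃! k : ↥S, φ g k ≠ φ (φ.symm x) k := by
    refine ⟨i, ?_, ?_⟩
    · rw [φ.apply_symm_apply]
      simp only [hx, if_pos rfl]
      exact fun hc => by revert hc; cases φ g i <;> simp
    · intro k hk
      rw [φ.apply_symm_apply] at hk
      by_contra hne
      simp only [hx, if_neg hne] at hk
      exact hk rfl
  have hmem : g⁻¹ * (φ.symm x) ∈ S := (hadj g (φ.symm x)).mpr hd
  refine ⟨⟨g⁻¹ * (φ.symm x), hmem⟩, ?_⟩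
  have hgs : g * ↑(⟨g⁻¹ * (φ.symm x), hmem⟩ : ↥S) = φ.symm x := by
    simp
  symm
  apply beta_uniq hadj
  rw [hgs, φ.apply_symm_apply]
  simp only [hx, if_pos rfl]
  exact fun hc => by revert hc; cases φ g i <;> simp

lemma beta_same (hinv : ∀ s ∈ S, s * s = 1 ∧ s ≠ 1) (hadj : IsCoord φ) (g : G) (s : ↥S) :
    beta hadj (g * ↑s) s = beta hadj g s := by
  have hss : g * ↑s * ↑s = g := by
    rw [mul_assoc, (hinv _ s.2).1, mul_one]
  symm
  apply beta_uniq hadj (g * ↑s) s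
  rw [hss]
  exact Ne.symm (beta_spec hadj g s)
variable {j : G →* Equiv.Perm ↥S}

lemma traj_mul (hinv : ∀ s ∈ S, s * s = 1 ∧ s ≠ 1)
    (hjtraj : ∀ s t : ↥S, (s : G) * t * (j (t : G) s : G) *
      ((j ((j (t : G) s : ↥S) : G) t : ↥S) : G) = 1) (s t : ↥S) :
    (↑s : G) * ↑t = ↑(j ↑(j ↑t s) t) * ↑(j ↑t s) := by
  have h := hjtraj s t
  set s' : ↥S := j ↑t s
  set t' : ↥S := j ↑s' t
  have h1 : (↑s : G) * ↑t = ((↑s' : G) * (↑t' : G))⁻¹ := by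
    rw [eq_inv_iff_mul_eq_one]
    calc (↑s : G) * ↑t * ((↑s' : G) * ↑t') = (↑s : G) * ↑t * ↑s' * ↑t' := by group
    _ = 1 := h
  rw [h1, mul_inv_rev, inv_self hinv t'.2, inv_self hinv s'.2]

lemma traj_ne (hinv : ∀ s ∈ S, s * s = 1 ∧ s ≠ 1)
    (hjfix : ∀ s : ↥S, j (s : G) s = s)
    (hjtraj : ∀ s t : ↥S, (s : G) * t * (j (t : G) s : G) *
      ((j ((j (t : G) s : ↥S) : G) t : ↥S) : G) = 1)
    {s t : ↥S} (hst : s ≠ t) : (j ↑(j ↑t s) t : ↥S) ≠ s := by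
  intro heq
  set s' : ↥S := j ↑t s with hs'
  set t' : ↥S := j ↑s' t with ht'
  have h : (↑s : G) * ↑t * ↑s' * ↑s = 1 := by
    have h0 := hjtraj s t
    rw [show ((j ((j (t : G) s : ↥S) : G) t : ↥S) : G) = (↑t' : G) from rfl, heq] at h0
    exact h0
  have h2 : (↑t : G) * ↑s' = 1 := by
    have h3 : (↑t : G) * ↑s' = (↑s : G)⁻¹ * 1 * (↑s : G)⁻¹ := by
      rw [← h]; group
    rw [inv_self hinv s.2] at h3
    rw [h3, mul_one, (hinv _ s.2).1]
  have hs't : s' = t := by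
    apply Subtype.ext
    have h4 : (↑s' : G) = (↑t : G)⁻¹ := eq_inv_of_mul_eq_one_right h2
    rw [h4, inv_self hinv t.2]
  have htt' : t' = t := by rw [ht', hs't, hjfix]
  exact hst (by rw [← heq, htt'])

lemma mul_ne_one (hinv : ∀ s ∈ S, s * s = 1 ∧ s ≠ 1) {s t : ↥S} (hst : s ≠ t) :
    (↑s : G) * ↑t ≠ 1 := by
  intro h
  apply hst
  apply Subtype.ext
  have h4 : (↑s : G) = (↑t : G)⁻¹ := eq_inv_of_mul_eq_one_left h
  rw [h4, inv_self hinv t.2]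

lemma beta_step (hinv : ∀ s ∈ S, s * s = 1 ∧ s ≠ 1) (hadj : IsCoord φ)
    (hjfix : ∀ s : ↥S, j (s : G) s = s)
    (hjtraj : ∀ s t : ↥S, (s : G) * t * (j (t : G) s : G) *
      ((j ((j (t : G) s : ↥S) : G) t : ↥S) : G) = 1)
    (g : G) (s t : ↥S) :
    beta hadj (g * ↑s) t = beta hadj g (j ↑(j ↑t s) t) := by
  by_cases hst : s = t
  · subst hst
    rw [hjfix, hjfix]
    exact beta_same hinv hadj g s
  · set s' : ↥S := j ↑t s with hs'
    set t' : ↥S := j ↑s' t with ht'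
    have hmul : g * ↑s * ↑t = g * ↑t' * ↑s' := by
      rw [mul_assoc, mul_assoc, traj_mul hinv hjtraj s t]
    set a := beta hadj g s with ha
    set b := beta hadj (g * ↑s) t with hb
    set c := beta hadj g t' with hc
    set d := beta hadj (g * ↑t') s' with hd
    have hst' : s ≠ t' := Ne.symm (traj_ne hinv hjfix hjtraj hst)
    have hac : c ≠ a := by
      intro h
      apply hst'
      symm
      apply Subtype.ext
      apply mul_left_cancel (a := g)
      apply φ.injective
      funext i
      rw [flip_eq hadj g s i, flip_eq hadj g t' i, ← ha, ← hc, h]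
    have hcd : c ≠ d := by
      intro h
      have hts : (↑t' : G) * ↑s' ≠ 1 := by
        rw [← traj_mul hinv hjtraj s t]
        exact mul_ne_one hinv hst
      apply hts
      apply mul_left_cancel (a := g)
      rw [← mul_assoc, mul_one]
      apply φ.injective
      funext i
      rw [flip_eq hadj (g * ↑t') s' i, ← hd, ← h, flip_eq hadj g t' i, ← hc]
      by_cases hic : i = c <;> simp [hic]
    have E : φ (g * ↑s * ↑t) c = φ (g * ↑t' * ↑s') c := by rw [hmul]
    rw [flip_eq hadj (g * ↑s) t c, ← hb, flip_eq hadj g s c, ← ha,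
        flip_eq hadj (g * ↑t') s' c, ← hd, flip_eq hadj g t' c, ← hc] at E
    rw [if_neg hac, if_neg hcd, if_pos rfl] at E
    by_cases hcb : c = b
    · rw [hb, hc] at hcb; exact hcb.symm
    · rw [if_neg hcb] at E
      exact absurd E (by cases φ g c <;> simp)
variable {T : Set G}

/-- The set of cube coordinates corresponding to `T`. -/
def Tstar (hadj : IsCoord φ) (T : Set G) : Set ↥S :=
  {i | ∃ t : ↥S, ↑t ∈ T ∧ beta hadj 1 t = i}

lemma j_mem_iff (hTinv : ∀ (g : G) (s : ↥S), (s : G) ∈ T → ((j g s : ↥S) : G) ∈ T)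
    (w : G) (t : ↥S) : ((j w t : ↥S) : G) ∈ T ↔ (↑t : G) ∈ T := by
  constructor
  · intro h
    have := hTinv w⁻¹ (j w t) h
    rwa [map_inv, Equiv.Perm.inv_def, Equiv.symm_apply_apply] at this
  · exact hTinv w t

lemma beta_mem_Tstar (hinv : ∀ s ∈ S, s * s = 1 ∧ s ≠ 1) (hadj : IsCoord φ)
    (hjfix : ∀ s : ↥S, j (s : G) s = s)
    (hjtraj : ∀ s t : ↥S, (s : G) * t * (j (t : G) s : G) *
      ((j ((j (t : G) s : ↥S) : G) t : ↥S) : G) = 1)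
    (hgen : Subgroup.closure S = ⊤)
    (hTinv : ∀ (g : G) (s : ↥S), (s : G) ∈ T → ((j g s : ↥S) : G) ∈ T)
    (g : G) (t : ↥S) : beta hadj g t ∈ Tstar hadj T ↔ (↑t : G) ∈ T := by
  have base : ∀ t : ↥S, (beta hadj 1 t ∈ Tstar hadj T ↔ (↑t : G) ∈ T) := by
    intro u
    constructor
    · rintro ⟨t₀, ht₀, he⟩
      rwa [← beta_inj hadj 1 he]
    · intro ht
      exact ⟨u, ht, rfl⟩
  have step : ∀ g : G, (∀ u : ↥S, (beta hadj g u ∈ Tstar hadj T ↔ (↑u : G) ∈ T)) →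
      ∀ s : ↥S, ∀ u : ↥S,
        (beta hadj (g * ↑s) u ∈ Tstar hadj T ↔ (↑u : G) ∈ T) := by
    intro g hg s u
    rw [beta_step hinv hadj hjfix hjtraj g s u, hg]
    exact j_mem_iff hTinv _ u
  have main : ∀ l : List G, (∀ x ∈ l, x ∈ S) →
      ∀ g : G, (∀ u : ↥S, (beta hadj g u ∈ Tstar hadj T ↔ (↑u : G) ∈ T)) →
      (∀ u : ↥S, (beta hadj (g * l.prod) u ∈ Tstar hadj T ↔ (↑u : G) ∈ T)) := by
    intro l
    induction l with
    | nil => intro _ g hg; simpa using hg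
    | cons x l ih =>
      intro hx g hg
      have hxS : x ∈ S := hx x List.mem_cons_self
      have h2 : g * (x :: l).prod = (g * ↑(⟨x, hxS⟩ : ↥S)) * l.prod := by
        rw [List.prod_cons, ← mul_assoc]
      rw [h2]
      exact ih (fun y hy => hx y (List.mem_cons_of_mem x hy)) _ (step g hg ⟨x, hxS⟩)
  obtain ⟨l, hl, hl2⟩ := exists_list hinv (hgen ▸ Subgroup.mem_top g)
  have := main l hl 1 base
  rw [one_mul, hl2] at this
  exact this t

/-- support of an element. -/
def supp (φ : G ≃ (↥S → Bool)) (g : G) : Set ↥S := {i | φ g i = true}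

lemma supp_mul_subset (hadj : IsCoord φ) (g : G) (s : ↥S) :
    supp φ (g * ↑s) ⊆ supp φ g ∪ {beta hadj g s} := by
  intro i hi
  simp only [supp, Set.mem_setOf_eq, flip_eq hadj g s i] at hi
  by_cases h : i = beta hadj g s
  · exact Or.inr h
  · rw [if_neg h] at hi
    exact Or.inl hi

lemma supp_one (hφ1 : ∀ i, φ 1 i = false) : supp φ 1 = ∅ := by
  ext i; simp [supp, hφ1 i]

lemma supp_finite (hinv : ∀ s ∈ S, s * s = 1 ∧ s ≠ 1) (hadj : IsCoord φ)
    (hgen : Subgroup.closure S = ⊤) (hφ1 : ∀ i, φ 1 i = false) (g : G) :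
    (supp φ g).Finite := by
  have main : ∀ l : List G, (∀ x ∈ l, x ∈ S) →
      ∀ g : G, (supp φ g).Finite → (supp φ (g * l.prod)).Finite := by
    intro l
    induction l with
    | nil => intro _ g hg; simpa using hg
    | cons x l ih =>
      intro hx g hg
      have hxS : x ∈ S := hx x List.mem_cons_self
      have h2 : g * (x :: l).prod = (g * ↑(⟨x, hxS⟩ : ↥S)) * l.prod := by
        rw [List.prod_cons, ← mul_assoc]
      rw [h2]
      refine ih (fun y hy => hx y (List.mem_cons_of_mem x hy)) _ ?_
      exact ((hg.union (Set.finite_singleton _)).subset (supp_mul_subset hadj g ⟨x, hxS⟩))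
  obtain ⟨l, hl, hl2⟩ := exists_list hinv (hgen ▸ Subgroup.mem_top g)
  have := main l hl 1 (by rw [supp_one hφ1]; exact Set.finite_empty)
  rwa [one_mul, hl2] at this
lemma supp_subset_of_mem (hinv : ∀ s ∈ S, s * s = 1 ∧ s ≠ 1) (hadj : IsCoord φ)
    (hjfix : ∀ s : ↥S, j (s : G) s = s)
    (hjtraj : ∀ s t : ↥S, (s : G) * t * (j (t : G) s : G) *
      ((j ((j (t : G) s : ↥S) : G) t : ↥S) : G) = 1)
    (hgen : Subgroup.closure S = ⊤) (hφ1 : ∀ i, φ 1 i = false)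
    (hTinv : ∀ (g : G) (s : ↥S), (s : G) ∈ T → ((j g s : ↥S) : G) ∈ T)
    (hTS : T ⊆ S) {g : G} (hg : g ∈ Subgroup.closure T) :
    supp φ g ⊆ Tstar hadj T := by
  have hTinv' : ∀ x ∈ T, x * x = 1 ∧ x ≠ 1 := fun x hx => hinv x (hTS hx)
  have main : ∀ l : List G, (∀ x ∈ l, x ∈ T) →
      ∀ g : G, supp φ g ⊆ Tstar hadj T → supp φ (g * l.prod) ⊆ Tstar hadj T := by
    intro l
    induction l with
    | nil => intro _ g hg; simpa using hg
    | cons x l ih =>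
      intro hx g hgs
      have hxT : x ∈ T := hx x List.mem_cons_self
      have hxS : x ∈ S := hTS hxT
      have h2 : g * (x :: l).prod = (g * ↑(⟨x, hxS⟩ : ↥S)) * l.prod := by
        rw [List.prod_cons, ← mul_assoc]
      rw [h2]
      refine ih (fun y hy => hx y (List.mem_cons_of_mem x hy)) _ ?_
      intro i hi
      rcases supp_mul_subset hadj g ⟨x, hxS⟩ hi with h | h
      · exact hgs h
      · rw [Set.mem_singleton_iff] at h
        rw [h]
        exact (beta_mem_Tstar hinv hadj hjfix hjtraj hgen hTinv g ⟨x, hxS⟩).mpr hxT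
  obtain ⟨l, hl, hl2⟩ := exists_list hTinv' hg
  have := main l hl 1 (by rw [supp_one hφ1]; exact Set.empty_subset _)
  rwa [one_mul, hl2] at this

lemma mem_of_supp_subset (hinv : ∀ s ∈ S, s * s = 1 ∧ s ≠ 1) (hadj : IsCoord φ)
    (hjfix : ∀ s : ↥S, j (s : G) s = s)
    (hjtraj : ∀ s t : ↥S, (s : G) * t * (j (t : G) s : G) *
      ((j ((j (t : G) s : ↥S) : G) t : ↥S) : G) = 1)
    (hgen : Subgroup.closure S = ⊤) (hφ1 : ∀ i, φ 1 i = false)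
    (hTinv : ∀ (g : G) (s : ↥S), (s : G) ∈ T → ((j g s : ↥S) : G) ∈ T)
    {g : G} (hsupp : supp φ g ⊆ Tstar hadj T) : g ∈ Subgroup.closure T := by
  have key : ∀ (n : ℕ) (g : G) (hfin : (supp φ g).Finite), hfin.toFinset.card = n →
      supp φ g ⊆ Tstar hadj T → g ∈ Subgroup.closure T := by
    intro n
    induction n using Nat.strong_induction_on with
    | _ n ih =>
      intro g hfin hcard hsupp
      by_cases hempty : supp φ g = ∅
      · have hg1 : g = 1 := by
          apply φ.injective
          funext i
          have h1 : φ g i ≠ true := fun h => by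
            rw [Set.eq_empty_iff_forall_notMem] at hempty
            exact hempty i h
          rw [hφ1 i]
          revert h1
          cases φ g i <;> simp
        rw [hg1]
        exact Subgroup.one_mem _
      · obtain ⟨i, hi⟩ := Set.nonempty_iff_ne_empty.mpr hempty
        obtain ⟨t, ht⟩ := beta_surj hadj g i
        have hiT : i ∈ Tstar hadj T := hsupp hi
        have htT : (↑t : G) ∈ T := by
          rw [← beta_mem_Tstar hinv hadj hjfix hjtraj hgen hTinv g t, ht]
          exact hiT
        have hitrue : φ g i = true := hi
        have hsupp2 : supp φ (g * ↑t) = supp φ g \ {i} := by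
          ext k
          simp only [supp, Set.mem_setOf_eq, Set.mem_diff, Set.mem_singleton_iff,
            flip_eq hadj g t k, ht]
          by_cases hk : k = i
          · subst hk
            simp [hitrue]
          · simp [hk]
        have hss : supp φ (g * ↑t) ⊂ supp φ g := by
          rw [hsupp2]
          exact ⟨Set.diff_subset, fun hsub => (hsub hi).2 rfl⟩
        have hfin2 : (supp φ (g * ↑t)).Finite := hfin.subset hss.subset
        have hlt : hfin2.toFinset.card < n := by
          rw [← hcard]
          exact Finset.card_lt_card (Set.Finite.toFinset_ssubset_toFinset.mpr hss)
        have hmem : g * ↑t ∈ Subgroup.closure T := by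
          refine ih _ hlt (g * ↑t) hfin2 rfl ?_
          rw [hsupp2]
          exact Set.diff_subset.trans hsupp
        have hgeq : g = (g * ↑t) * ↑t := by
          rw [mul_assoc, (hinv _ t.2).1, mul_one]
        rw [hgeq]
        exact Subgroup.mul_mem _ hmem (Subgroup.subset_closure htT)
  exact key _ g (supp_finite hinv hadj hgen hφ1 g) rfl hsupp
lemma main (hinv : ∀ s ∈ S, s * s = 1 ∧ s ≠ 1) (hgen : Subgroup.closure S = ⊤)
    (hadj : IsCoord φ) (hφ1 : ∀ i, φ 1 i = false)
    (hjfix : ∀ s : ↥S, j (s : G) s = s)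
    (hjtraj : ∀ s t : ↥S, (s : G) * t * (j (t : G) s : G) *
      ((j ((j (t : G) s : ↥S) : G) t : ↥S) : G) = 1)
    (hTS : T ⊆ S)
    (hTinv : ∀ (g : G) (s : ↥S), (s : G) ∈ T → ((j g s : ↥S) : G) ∈ T) :
    IsCubeGroup {h : Subgroup.closure T | (h : G) ∈ T} := by
  classical
  set H := Subgroup.closure T with hH
  set T' : Set ↥H := {h : ↥H | (h : G) ∈ T} with hT'
  have hinvT' : ∀ u ∈ T', u * u = 1 ∧ u ≠ 1 := by
    intro u hu
    have huT : (↑u : G) ∈ T := hu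
    constructor
    · apply Subtype.ext
      exact (hinv _ (hTS huT)).1
    · intro h1
      exact (hinv _ (hTS huT)).2 (congrArg Subtype.val h1)
  refine ⟨hinvT', ?_, ?_⟩
  · exact Subgroup.closure_closure_coe_preimage
  -- the graph isomorphism
  · let e : ↥T' → ↥S := fun u => beta hadj 1 ⟨((u : ↥H) : G), hTS u.2⟩
    have einj : Function.Injective e := by
      intro u v h
      have h2 := beta_inj hadj 1 h
      have h3 := congrArg (Subtype.val : ↥S → G) h2
      exact Subtype.ext (Subtype.ext h3)
    have emem : ∀ u : ↥T', e u ∈ Tstar hadj T := by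
      intro u
      have hu2 : ((u : ↥H) : G) ∈ T := u.2
      exact ⟨⟨((u : ↥H) : G), hTS hu2⟩, hu2, rfl⟩
    have esurj : ∀ i ∈ Tstar hadj T, ∃ u, e u = i := by
      rintro i ⟨t₀, ht₀, rfl⟩
      have hu : (⟨(↑t₀ : G), Subgroup.subset_closure ht₀⟩ : ↥H) ∈ T' := ht₀
      refine ⟨⟨_, hu⟩, ?_⟩
      exact congrArg (beta hadj 1) (Subtype.ext rfl)
    set Φ₀ : ↥H → (↥T' → Bool) := fun h u => φ ↑h (e u) with hΦ₀
    have hsuppT : ∀ h : ↥H, supp φ ↑h ⊆ Tstar hadj T := fun h =>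
      supp_subset_of_mem hinv hadj hjfix hjtraj hgen hφ1 hTinv hTS h.2
    have hout : ∀ (h : ↥H) (i : ↥S), i ∉ Tstar hadj T → φ ↑h i = false := by
      intro h i hi
      by_contra hc
      apply hi
      apply hsuppT h
      show φ ↑h i = true
      revert hc
      cases φ (↑h : G) i <;> simp
    have Φinj : Function.Injective Φ₀ := by
      intro h₁ h₂ heq
      apply Subtype.ext
      apply φ.injective
      funext i
      by_cases hi : i ∈ Tstar hadj T
      · obtain ⟨u, rfl⟩ := esurj i hi
        exact congrFun heq u
      · rw [hout h₁ i hi, hout h₂ i hi]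
    have Φsurj : Function.Surjective Φ₀ := by
      intro x
      set y : ↥S → Bool := fun i => if hy : ∃ u, e u = i then x hy.choose else false with hy'
      have hyg : supp φ (φ.symm y) ⊆ Tstar hadj T := by
        intro i hi
        have hyi : y i = true := by
          have : φ (φ.symm y) i = true := hi
          rwa [φ.apply_symm_apply] at this
        by_cases hy : ∃ u, e u = i
        · obtain ⟨u, rfl⟩ := hy
          exact emem u
        · simp only [hy', dif_neg hy] at hyi
          exact absurd hyi Bool.false_ne_true
      refine ⟨⟨φ.symm y, mem_of_supp_subset hinv hadj hjfix hjtraj hgen hφ1 hTinv hyg⟩, ?_⟩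
      funext u
      show φ (φ.symm y) (e u) = x u
      rw [φ.apply_symm_apply]
      have hy : ∃ u', e u' = e u := ⟨u, rfl⟩
      show (if hy : ∃ u', e u' = e u then x hy.choose else false) = x u
      rw [dif_pos hy]
      exact congrArg x (einj hy.choose_spec)
    refine ⟨⟨Equiv.ofBijective Φ₀ ⟨Φinj, Φsurj⟩, ?_⟩⟩
    intro h₁ h₂
    show (cubeGraph ↥T').Adj (Φ₀ h₁) (Φ₀ h₂) ↔ (cayleyGraph T').Adj h₁ h₂
    rw [cayley_adj hinvT']
    have hmem : h₁⁻¹ * h₂ ∈ T' ↔ ((↑h₁ : G)⁻¹ * ↑h₂ ∈ T) := by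
      show ((↑(h₁⁻¹ * h₂) : G) ∈ T) ↔ _
      push_cast
      rfl
    rw [hmem]
    have hdiff_mem : ∀ i : ↥S, φ ↑h₁ i ≠ φ ↑h₂ i → i ∈ Tstar hadj T := by
      intro i hne
      by_contra hi
      rw [hout h₁ i hi, hout h₂ i hi] at hne
      exact hne rfl
    constructor
    · rintro ⟨u₀, hd, hu⟩
      have hEU : ∃! i : ↥S, φ ↑h₁ i ≠ φ ↑h₂ i := by
        refine ⟨e u₀, hd, ?_⟩
        intro i hi
        obtain ⟨u, rfl⟩ := esurj i (hdiff_mem i hi)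
        rw [hu u hi]
      have hmemS : (↑h₁ : G)⁻¹ * ↑h₂ ∈ S := (hadj _ _).mpr hEU
      have h2eq : (↑h₂ : G) = ↑h₁ * ↑(⟨_, hmemS⟩ : ↥S) := by
        show (↑h₂ : G) = ↑h₁ * ((↑h₁ : G)⁻¹ * ↑h₂)
        group
      have hbeta : beta hadj ↑h₁ ⟨_, hmemS⟩ ∈ Tstar hadj T := by
        apply hdiff_mem
        have := beta_spec hadj (↑h₁ : G) ⟨_, hmemS⟩
        rwa [← h2eq] at this
      exact (beta_mem_Tstar hinv hadj hjfix hjtraj hgen hTinv _ _).mp hbeta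
    · intro htT
      set t : ↥S := ⟨(↑h₁ : G)⁻¹ * ↑h₂, hTS htT⟩ with ht
      have h2eq : (↑h₂ : G) = ↑h₁ * ↑t := by
        show (↑h₂ : G) = ↑h₁ * ((↑h₁ : G)⁻¹ * ↑h₂)
        group
      have hbT : beta hadj (↑h₁ : G) t ∈ Tstar hadj T :=
        (beta_mem_Tstar hinv hadj hjfix hjtraj hgen hTinv _ _).mpr htT
      obtain ⟨u₀, hu₀⟩ := esurj _ hbT
      refine ⟨u₀, ?_, ?_⟩
      · show φ ↑h₁ (e u₀) ≠ φ ↑h₂ (e u₀)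
        rw [hu₀, h2eq]
        exact beta_spec hadj (↑h₁ : G) t
      · intro u hdne
        apply einj
        rw [hu₀]
        apply beta_uniq hadj (↑h₁ : G) t
        have : φ ↑h₁ (e u) ≠ φ ↑h₂ (e u) := hdne
        rwa [h2eq] at this
end Stmt16Aux

theorem stmt_16 (G : Type*) [Group G] (S : Set G) (hS : IsCubeGroup S)
    -- the permutation representation
    (j : G →* Equiv.Perm S)
    (hjfix : ∀ s : S, j (s : G) s = s)
    (hjtraj : ∀ s t : S, (s : G) * t * (j (t : G) s : G) *
      ((j ((j (t : G) s : S) : G) t : S) : G) = 1)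
    -- `T` is a `G`-invariant subset of `S`
    (T : Set G) (hTS : T ⊆ S)
    (hTinv : ∀ (g : G) (s : S), (s : G) ∈ T → ((j g s : S) : G) ∈ T) :
    -- `(G_T, T)` is a cube group
    IsCubeGroup {h : Subgroup.closure T | (h : G) ∈ T} := by
  classical
  obtain ⟨hinv, hgen, ⟨ψ⟩⟩ := hS
  set c : ↥S → Bool := ψ 1 with hc
  have hinvol : Function.Involutive (fun (x : ↥S → Bool) i => Bool.xor (x i) (c i)) := by
    intro x
    funext i
    simp
  set φ : G ≃ (↥S → Bool) := ψ.toEquiv.trans hinvol.toPerm with hφdef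
  have hφ : ∀ (g : G) (i : ↥S), φ g i = Bool.xor (ψ g i) (c i) := fun g i => rfl
  have hφ1 : ∀ i, φ 1 i = false := by
    intro i
    rw [hφ, hc]
    simp
  have hadj : Stmt16Aux.IsCoord φ := by
    intro g h
    have h1 : g⁻¹ * h ∈ S ↔ (cubeGraph ↥S).Adj (ψ g) (ψ h) := by
      rw [ψ.map_adj_iff]
      exact (Stmt16Aux.cayley_adj hinv).symm
    rw [h1]
    show (∃! i : ↥S, ψ g i ≠ ψ h i) ↔ ∃! i : ↥S, φ g i ≠ φ h i
    apply existsUnique_congr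
    intro i
    rw [hφ, hφ]
    cases ψ g i <;> cases ψ h i <;> cases c i <;> simp
  exact Stmt16Aux.main hinv hgen hadj hφ1 hjfix hjtraj hTS hTinv
end

section
/- Let G be a finite group and S a generating set of involutions with |S| = n, and suppose Cay(G,S) is isomorphic as a graph to the n-cube. Then for any two distinct s, t ∈ S, the 4-cycle of the cube spanned by the edges at the identity labeled s and t yields elements s', t' ∈ S with s t = t' s'; in particular S S ⊆ S S (products of two generators can be rewritten with factors in prescribed order), i.e., for all s,t ∈ S there exist s',t' ∈ S with st = t's'. -/
/-- In the cube graph, any path x–y–z with x ≠ z closes to a 4-cycle: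
there is a common neighbor w of x and z. -/
lemma cube_common_neighbor {ι : Type*} [DecidableEq ι] {x y z : ι → Bool}
    (hxy : (cubeGraph ι).Adj x y) (hyz : (cubeGraph ι).Adj y z) (hxz : x ≠ z) :
    ∃ w, (cubeGraph ι).Adj x w ∧ (cubeGraph ι).Adj w z := by
  obtain ⟨i, hi, hiu⟩ := hxy
  obtain ⟨j, hj, hju⟩ := hyz
  have hij : i ≠ j := by
    rintro rfl
    apply hxz
    funext k
    by_cases hk : k = i
    · subst hk
      revert hi hj; cases x k <;> cases y k <;> cases z k <;> simp
    · have h1 : x k = y k := by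
        by_contra h; exact hk (hiu k h)
      have h2 : y k = z k := by
        by_contra h; exact hk (hju k h)
      rw [h1, h2]
  have hxj : x j = y j := by by_contra h; exact hij (hiu j h).symm
  have hyi : y i = z i := by by_contra h; exact hij (hju i h)
  refine ⟨Function.update x j (z j), ⟨j, ?_, ?_⟩, ⟨i, ?_, ?_⟩⟩
  · simp only [Function.update_self]
    rw [hxj]; exact hj
  · intro k hk
    by_contra hkj
    exact hk (by rw [Function.update_of_ne hkj])
  · show Function.update x j (z j) i ≠ z i
    rw [Function.update_of_ne hij, ← hyi]
    exact hi
  · intro k hk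
    by_cases hkj : k = j
    · exact absurd (by subst hkj; simp) hk
    · by_contra hki
      rw [Function.update_of_ne hkj] at hk
      have hxk : x k = y k := by by_contra h; exact hki (hiu k h)
      have hyk : y k = z k := by by_contra h; exact (hkj (hju k h))
      exact hk (hxk.trans hyk)

theorem stmt_18 (G : Type*) [Group G] [Finite G] (S : Set G)
    (hS : IsCubeGroup S) :
    ∀ s ∈ S, ∀ t ∈ S, ∃ s' ∈ S, ∃ t' ∈ S, s * t = t' * s' := by
  classical
  obtain ⟨hinv, -, ⟨φ⟩⟩ := hS
  intro s hs t ht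
  -- S is closed under inverses (every element is an involution)
  have hself : ∀ v ∈ S, v⁻¹ = v := fun v hv =>
    inv_eq_of_mul_eq_one_left (hinv v hv).1
  have hmem : ∀ v : G, (v ∈ S ∨ v⁻¹ ∈ S) → v ∈ S := by
    intro v hv
    rcases hv with h | h
    · exact h
    · have := hself _ h
      rw [← inv_inv v, this]; exact h
  by_cases hst : s = t
  · exact ⟨t, ht, t, ht, by rw [hst]⟩
  · have hstne : s * t ≠ 1 := by
      intro h
      exact hst ((eq_inv_of_mul_eq_one_left h).trans (hself t ht))
    have h1s : (cayleyGraph S).Adj 1 s := by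
      refine ⟨Or.inl (by simpa using hs), fun h => (hinv s hs).2 h.symm⟩
    have hsst : (cayleyGraph S).Adj s (s * t) := by
      refine ⟨Or.inl (by simpa using ht), fun h => (hinv t ht).2 ?_⟩
      exact mul_left_cancel (a := s) (b := t) (c := 1) (by rw [mul_one]; exact h.symm)
    have h1st : (1 : G) ≠ s * t := fun h => hstne h.symm
    obtain ⟨w, hw1, hw2⟩ := cube_common_neighbor (φ.map_adj_iff.2 h1s)
      (φ.map_adj_iff.2 hsst) (fun h => h1st (φ.injective h))
    set u := φ.symm w with hu
    have hadj1 : (cayleyGraph S).Adj 1 u := by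
      have := φ.symm.map_adj_iff.2 hw1
      simpa [hu] using this
    have hadj2 : (cayleyGraph S).Adj u (s * t) := by
      have := φ.symm.map_adj_iff.2 hw2
      simpa [hu] using this
    have huS : u ∈ S := hmem u (by
      rcases hadj1.1 with h | h
      · left; simpa using h
      · right; simpa using h)
    have haS : u⁻¹ * (s * t) ∈ S := hmem _ (by
      rcases hadj2.1 with h | h
      · left; exact h
      · right; rw [mul_inv_rev, inv_inv]; exact h)
    exact ⟨u⁻¹ * (s * t), haS, u, huS, by group⟩
end
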